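/- Let $L/K$ be cyclic of degree $n$ with group $\langle \sigma \rangle$, $\psi : L \to M_n(K)$ a $K$-embedding, $X \in M_n(K)^\times$ with $X\psi(\lambda)X^{-1} = \psi(\sigma(\lambda))$ for all $\lambda \in L$, and $b := X^n \in K^\times$. If $x \in L^\times$ satisfies $N_{L/K}(x) = a/b$, then $(\psi(x) X)^n = a \cdot I_n$, and hence $\psi$ extends to a $K$-algebra isomorphism $(L/K, \sigma, a) \to M_n(K)$ sending the canonical generator $v$ to $\psi(x)X$. -/

import Mathlib

/-- A presentation of a `K`-algebra `A` as the cyclic algebra `(L/K, σ, a)`: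
an embedding `ι : L → A` and a unit `v` with `v ι(l) v⁻¹ = ι(σ l)`,
`v ^ [L:K] = a`, and `A = ⊕ᵢ ι(L) vⁱ` (unique representation of every element). -/
structure CyclicAlgebraPresentation (K L A : Type*) [Field K] [Field L] [Algebra K L]
    [Ring A] [Algebra K A] (σ : L ≃ₐ[K] L) (a : K) where
  ι : L →ₐ[K] A
  v : Aˣ
  conj : ∀ l : L, (v : A) * ι l * (↑v⁻¹ : A) = ι (σ l)
  vpow : (v : A) ^ Module.finrank K L = algebraMap K A a
  repr : ∀ x : A, ∃! c : Fin (Module.finrank K L) → L,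
    x = ∑ i, ι (c i) * (v : A) ^ (i : ℕ)

theorem cyclic_splitting_aux {K L A : Type*} [Field K] [Field L] [Algebra K L]
    [FiniteDimensional K L] [IsGalois K L] {n : ℕ} (hn : Module.finrank K L = n)
    (σ : L ≃ₐ[K] L) (hσ : ∀ g : L ≃ₐ[K] L, g ∈ Subgroup.zpowers σ)
    [Ring A] [Algebra K A] (a : K) (ha : a ≠ 0)
    (ι : L →ₐ[K] A) (v : Aˣ)
    (hconj : ∀ l : L, (v : A) * ι l * (↑v⁻¹ : A) = ι (σ l))
    (hvpow : (v : A) ^ n = algebraMap K A a)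
    (hrepr : ∀ z : A, ∃! c : Fin n → L, z = ∑ i, ι (c i) * (v : A) ^ (i : ℕ))
    (ψ : L →ₐ[K] Matrix (Fin n) (Fin n) K)
    (X : (Matrix (Fin n) (Fin n) K)ˣ)
    (hX : ∀ l : L, (X : Matrix (Fin n) (Fin n) K) * ψ l * (↑X⁻¹ : Matrix (Fin n) (Fin n) K)
      = ψ (σ l))
    (b : K) (hb : b ≠ 0)
    (hXn : (X : Matrix (Fin n) (Fin n) K) ^ n = algebraMap K (Matrix (Fin n) (Fin n) K) b)
    (x : L) (hx : Algebra.norm K x = a / b) :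
    (ψ x * (X : Matrix (Fin n) (Fin n) K)) ^ n = algebraMap K (Matrix (Fin n) (Fin n) K) a ∧
    ∃ Φ : A ≃ₐ[K] Matrix (Fin n) (Fin n) K,
      (∀ l : L, Φ (ι l) = ψ l) ∧ Φ (v : A) = ψ x * (X : Matrix (Fin n) (Fin n) K) := by
  classical
  have hNpos : 0 < n := hn ▸ Module.finrank_pos
  haveI : NeZero n := ⟨hNpos.ne'⟩
  set M := Matrix (Fin n) (Fin n) K with hM
  set Xm : M := (X : M) with hXm
  set Y : M := ψ x * Xm with hY
  -- commutation facts, matrix side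
  have hXc : ∀ l : L, Xm * ψ l = ψ (σ l) * Xm := by
    intro l
    calc Xm * ψ l = Xm * ψ l * ((↑X⁻¹ : M) * Xm) := by rw [X.inv_mul, mul_one]
    _ = ψ (σ l) * Xm := by rw [← mul_assoc, hX l]
  have hYc : ∀ l : L, Y * ψ l = ψ (σ l) * Y := by
    intro l
    calc ψ x * Xm * ψ l = ψ x * (ψ (σ l) * Xm) := by rw [mul_assoc, hXc]
    _ = ψ (σ l) * (ψ x * Xm) := by
        rw [← mul_assoc, ← map_mul, mul_comm x (σ l), map_mul, mul_assoc]
  have hXck : ∀ (k : ℕ) (l : L), Xm ^ k * ψ l = ψ ((σ ^ k) l) * Xm ^ k := by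
    intro k
    induction k with
    | zero => intro l; simp
    | succ k IH =>
      intro l
      rw [pow_succ, mul_assoc, hXc, ← mul_assoc, IH, mul_assoc, ← pow_succ]
      rfl
  have hYck : ∀ (k : ℕ) (l : L), Y ^ k * ψ l = ψ ((σ ^ k) l) * Y ^ k := by
    intro k
    induction k with
    | zero => intro l; simp
    | succ k IH =>
      intro l
      rw [pow_succ, mul_assoc, hYc, ← mul_assoc, IH, mul_assoc, ← pow_succ]
      rfl
  -- commutation, A side
  have hvc : ∀ l : L, (v : A) * ι l = ι (σ l) * v := by
    intro l
    calc (v : A) * ι l = (v : A) * ι l * ((↑v⁻¹ : A) * v) := by rw [v.inv_mul, mul_one]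
    _ = ι (σ l) * v := by rw [← mul_assoc, hconj l]
  have hvck : ∀ (k : ℕ) (l : L), (v : A) ^ k * ι l = ι ((σ ^ k) l) * (v : A) ^ k := by
    intro k
    induction k with
    | zero => intro l; simp
    | succ k IH =>
      intro l
      rw [pow_succ, mul_assoc, hvc, ← mul_assoc, IH, mul_assoc, ← pow_succ]
      rfl
  -- part 1
  have hpow : ∀ k : ℕ, (ψ x * Xm) ^ k = ψ (∏ i ∈ Finset.range k, (σ ^ i) x) * Xm ^ k := by
    intro k
    induction k with
    | zero => simp
    | succ k IH =>
      rw [pow_succ, IH, Finset.prod_range_succ, map_mul, mul_assoc, ← mul_assoc (Xm ^ k),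
        hXck k x, mul_assoc, ← pow_succ, ← mul_assoc]
  have hordσ : orderOf σ = n := by
    rw [← Nat.card_zpowers, (Subgroup.eq_top_iff' _).mpr hσ, Subgroup.card_top,
      IsGalois.card_aut_eq_finrank, hn]
  have hbij : Function.Bijective (fun i : Fin n => σ ^ (i : ℕ)) := by
    refine (Fintype.bijective_iff_injective_and_card _).mpr ⟨?_, ?_⟩
    · intro i j h
      exact Fin.ext (pow_injOn_Iio_orderOf (by simp [Set.mem_Iio, hordσ])
        (by simp [Set.mem_Iio, hordσ]) h)
    · rw [Fintype.card_fin, ← Nat.card_eq_fintype_card, IsGalois.card_aut_eq_finrank, hn]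
  have hnormprod : ∀ y : L,
      (∏ i ∈ Finset.range n, (σ ^ i) y) = algebraMap K L (Algebra.norm K y) := by
    intro y
    rw [Algebra.norm_eq_prod_automorphisms,
      ← Fin.prod_univ_eq_prod_range (fun i => (σ ^ i) y) n]
    exact Fintype.prod_equiv (Equiv.ofBijective _ hbij) _ _ (fun i => rfl)
  have part1 : Y ^ n = algebraMap K M a := by
    rw [hY, hpow n, hnormprod x, hx, AlgHom.commutes, hXn, ← map_mul,
      div_mul_cancel₀ a hb]
  refine ⟨part1, ?_⟩
  -- units
  have hψu : ∀ {c : L}, c ≠ 0 → IsUnit (ψ c) := by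
    intro c hc
    exact ⟨⟨ψ c, ψ c⁻¹, by rw [← map_mul, mul_inv_cancel₀ hc, map_one],
      by rw [← map_mul, inv_mul_cancel₀ hc, map_one]⟩, rfl⟩
  have hx0 : x ≠ 0 := by
    intro h
    rw [h, Algebra.norm_zero] at hx
    exact (div_ne_zero ha hb) hx.symm
  have hYu : IsUnit Y := hY ▸ (hψu hx0).mul X.isUnit
  -- independence on the matrix side
  have Ginj0 : ∀ c : Fin n → L, ∑ i, ψ (c i) * Y ^ (i : ℕ) = 0 → c = 0 := by
    suffices H : ∀ s : ℕ, ∀ c : Fin n → L,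
        (Finset.univ.filter fun i => c i ≠ 0).card ≤ s →
        ∑ i, ψ (c i) * Y ^ (i : ℕ) = 0 → c = 0 by
      exact fun c hc => H _ c le_rfl hc
    intro s
    induction s with
    | zero =>
      intro c hcard hsum
      funext i
      by_contra hi
      have hmem : i ∈ Finset.univ.filter fun i => c i ≠ 0 :=
        Finset.mem_filter.mpr ⟨Finset.mem_univ _, hi⟩
      have := Finset.card_pos.mpr ⟨i, hmem⟩
      omega
    | succ s IH =>
      intro c hcard hsum
      by_cases h0 : (Finset.univ.filter fun i => c i ≠ 0).card ≤ s
      · exact IH c h0 hsum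
      have hne : (Finset.univ.filter fun i => c i ≠ 0).Nonempty :=
        Finset.card_pos.mp (by omega)
      obtain ⟨j, hj⟩ := hne
      have hcj : c j ≠ 0 := (Finset.mem_filter.mp hj).2
      by_cases hex : ∀ i ∈ Finset.univ.filter fun i => c i ≠ 0, i = j
      · have hsing : ∑ i, ψ (c i) * Y ^ (i : ℕ) = ψ (c j) * Y ^ (j : ℕ) := by
          refine Finset.sum_eq_single j (fun k _ hk => ?_) (fun h => absurd (Finset.mem_univ j) h)
          have hck : c k = 0 := by
            by_contra hk'
            exact hk (hex k (Finset.mem_filter.mpr ⟨Finset.mem_univ _, hk'⟩))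
          rw [hck, map_zero, zero_mul]
        rw [hsing] at hsum
        exact absurd hsum ((hψu hcj).mul (hYu.pow _)).ne_zero
      · push_neg at hex
        obtain ⟨i, hi, hij⟩ := hex
        have hci : c i ≠ 0 := (Finset.mem_filter.mp hi).2
        have hσij : (σ ^ (i : ℕ)) ≠ (σ ^ (j : ℕ)) := by
          intro h
          exact hij (Fin.ext (pow_injOn_Iio_orderOf (by simp [Set.mem_Iio, hordσ])
            (by simp [Set.mem_Iio, hordσ]) h))
        obtain ⟨l, hl⟩ : ∃ l : L, (σ ^ (i : ℕ)) l ≠ (σ ^ (j : ℕ)) l := by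
          by_contra h
          push_neg at h
          exact hσij (AlgEquiv.ext h)
        set c' : Fin n → L := fun k => c k * ((σ ^ (k : ℕ)) l - (σ ^ (j : ℕ)) l) with hc'
        have hsum' : ∑ k, ψ (c' k) * Y ^ (k : ℕ) = 0 := by
          have e1 : ∀ k : Fin n, ψ (c' k) * Y ^ (k : ℕ) =
              (ψ (c k) * Y ^ (k : ℕ)) * ψ l - ψ ((σ ^ (j : ℕ)) l) * (ψ (c k) * Y ^ (k : ℕ)) := by
            intro k
            rw [hc']
            simp only
            rw [map_mul, map_sub, mul_sub, sub_mul]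
            congr 1
            · rw [mul_assoc, ← hYck, ← mul_assoc]
            · rw [← map_mul, mul_comm (c k), map_mul, mul_assoc]
          rw [Finset.sum_congr rfl fun k _ => e1 k, Finset.sum_sub_distrib,
            ← Finset.sum_mul, ← Finset.mul_sum, hsum, zero_mul, mul_zero, sub_zero]
        have hsub : (Finset.univ.filter fun k => c' k ≠ 0) ⊆
            (Finset.univ.filter fun k => c k ≠ 0).erase j := by
          intro k hk
          have hk' : c' k ≠ 0 := (Finset.mem_filter.mp hk).2
          refine Finset.mem_erase.mpr ⟨?_, Finset.mem_filter.mpr ⟨Finset.mem_univ _, ?_⟩⟩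
          · rintro rfl
            exact hk' (by rw [hc']; simp)
          · intro h; exact hk' (by rw [hc']; simp [h])
        have hcard' : (Finset.univ.filter fun k => c' k ≠ 0).card ≤ s := by
          have := Finset.card_le_card hsub
          rw [Finset.card_erase_of_mem hj] at this
          omega
        have hc0 := IH c' hcard' hsum'
        exact absurd (congrFun hc0 i) (mul_ne_zero hci (sub_ne_zero.mpr hl))
  -- the linear maps
  let Flin : (Fin n → L) →ₗ[K] A :=
    { toFun := fun c => ∑ i, ι (c i) * (v : A) ^ (i : ℕ)
      map_add' := fun c d => by
        show (∑ i, ι ((c + d) i) * (v : A) ^ (i : ℕ)) = _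
        rw [← Finset.sum_add_distrib]
        exact Finset.sum_congr rfl fun i _ => by rw [Pi.add_apply, map_add, add_mul]
      map_smul' := fun k c => by
        show (∑ i, ι ((k • c) i) * (v : A) ^ (i : ℕ)) = _
        rw [RingHom.id_apply, Finset.smul_sum]
        exact Finset.sum_congr rfl fun i _ => by rw [Pi.smul_apply, map_smul, smul_mul_assoc] }
  let Glin : (Fin n → L) →ₗ[K] M :=
    { toFun := fun c => ∑ i, ψ (c i) * Y ^ (i : ℕ)
      map_add' := fun c d => by
        show (∑ i, ψ ((c + d) i) * Y ^ (i : ℕ)) = _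
        rw [← Finset.sum_add_distrib]
        exact Finset.sum_congr rfl fun i _ => by rw [Pi.add_apply, map_add, add_mul]
      map_smul' := fun k c => by
        show (∑ i, ψ ((k • c) i) * Y ^ (i : ℕ)) = _
        rw [RingHom.id_apply, Finset.smul_sum]
        exact Finset.sum_congr rfl fun i _ => by rw [Pi.smul_apply, map_smul, smul_mul_assoc] }
  have hFapp : ∀ c : Fin n → L, Flin c = ∑ i, ι (c i) * (v : A) ^ (i : ℕ) := fun _ => rfl
  have hGapp : ∀ c : Fin n → L, Glin c = ∑ i, ψ (c i) * Y ^ (i : ℕ) := fun _ => rfl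
  have hFbij : Function.Bijective Flin := by
    constructor
    · intro c d h
      obtain ⟨e, -, he⟩ := hrepr (Flin c)
      have hd : Flin c = ∑ i, ι (d i) * (v : A) ^ (i : ℕ) := by rw [h, hFapp]
      rw [he c rfl, he d hd]
    · intro z
      obtain ⟨c, hc, -⟩ := hrepr z
      exact ⟨c, hc.symm⟩
  have hGinj : Function.Injective Glin := by
    intro c d h
    have h0 : Glin (c - d) = 0 := by rw [map_sub, h, sub_self]
    rw [hGapp] at h0
    have h1 : c - d = 0 := Ginj0 (c - d) h0
    exact sub_eq_zero.mp h1
  have hfr : Module.finrank K (Fin n → L) = Module.finrank K M := by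
    rw [Module.finrank_pi_fintype, Module.finrank_matrix]
    simp [hn, Finset.sum_const, Finset.card_univ, mul_comm]
  have hGbij : Function.Bijective Glin :=
    ⟨hGinj, (LinearMap.injective_iff_surjective_of_finrank_eq_finrank hfr).mp hGinj⟩
  let Fequiv : (Fin n → L) ≃ₗ[K] A := LinearEquiv.ofBijective Flin hFbij
  let Φlin : A →ₗ[K] M := Glin ∘ₗ (Fequiv.symm : A →ₗ[K] (Fin n → L))
  have hΦF : ∀ c : Fin n → L, Φlin (Flin c) = Glin c := by
    intro c
    show Glin (Fequiv.symm (Flin c)) = Glin c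
    rw [show Flin c = Fequiv c from rfl, Fequiv.symm_apply_apply]
  -- the key computation
  have key2 : ∀ (i : ℕ) (m : L), Φlin (ι m * (v : A) ^ i) = ψ m * Y ^ i := by
    intro i
    induction i using Nat.strong_induction_on with
    | _ i IH =>
      intro m
      by_cases h : i < n
      · set e : Fin n → L := Pi.single (⟨i, h⟩ : Fin n) m with he
        have hek : ∀ k : Fin n, k ≠ (⟨i, h⟩ : Fin n) → e k = 0 := by
          intro k hk
          rw [he, Pi.single_eq_of_ne hk]
        have hei : e (⟨i, h⟩ : Fin n) = m := by rw [he, Pi.single_eq_same]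
        have hF : Flin e = ι m * (v : A) ^ i := by
          rw [hFapp]
          refine (Finset.sum_eq_single_of_mem (⟨i, h⟩ : Fin n) (Finset.mem_univ _) ?_).trans ?_
          · intro k _ hk
            simp only [hek k hk, map_zero, zero_mul]
          · simp [hei]
        have hG : Glin e = ψ m * Y ^ i := by
          rw [hGapp]
          refine (Finset.sum_eq_single_of_mem (⟨i, h⟩ : Fin n) (Finset.mem_univ _) ?_).trans ?_
          · intro k _ hk
            simp only [hek k hk, map_zero, zero_mul]
          · simp [hei]
        rw [← hF, hΦF, hG]
      · push_neg at h
        have hvi : (v : A) ^ i = algebraMap K A a * (v : A) ^ (i - n) := by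
          rw [← hvpow, ← pow_add]
          congr 1
          omega
        have hstep : ι m * (v : A) ^ i = ι (m * algebraMap K L a) * (v : A) ^ (i - n) := by
          rw [map_mul, AlgHom.commutes, mul_assoc, ← hvi]
        rw [hstep, IH (i - n) (by omega), map_mul, AlgHom.commutes, mul_assoc, ← part1,
          ← pow_add]
        congr 2
        omega
  have hz' : ∀ (z : A) (c : Fin n → L), z = ∑ i, ι (c i) * (v : A) ^ (i : ℕ) →
      Φlin z = ∑ i, ψ (c i) * Y ^ (i : ℕ) := by
    intro z c hc
    rw [hc, map_sum]
    exact Finset.sum_congr rfl fun i _ => key2 (i : ℕ) (c i)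
  have keymul : ∀ z w : A, Φlin (z * w) = Φlin z * Φlin w := by
    intro z w
    obtain ⟨c, hc, -⟩ := hrepr z
    obtain ⟨d, hd, -⟩ := hrepr w
    have hzw : z * w = ∑ i, ∑ j, ι (c i * (σ ^ (i : ℕ)) (d j)) * (v : A) ^ ((i : ℕ) + (j : ℕ)) := by
      rw [hc, hd, Finset.sum_mul_sum]
      refine Finset.sum_congr rfl fun i _ => Finset.sum_congr rfl fun j _ => ?_
      symm
      rw [map_mul, pow_add, ← mul_assoc, mul_assoc (ι (c i)), ← hvck, ← mul_assoc,
        mul_assoc (ι (c i) * (v : A) ^ (i : ℕ))]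
    rw [hzw, map_sum]
    have hterm : ∀ i : Fin n,
        Φlin (∑ j, ι (c i * (σ ^ (i : ℕ)) (d j)) * (v : A) ^ ((i : ℕ) + (j : ℕ)))
        = ∑ j, (ψ (c i) * Y ^ (i : ℕ)) * (ψ (d j) * Y ^ (j : ℕ)) := by
      intro i
      rw [map_sum]
      refine Finset.sum_congr rfl fun j _ => ?_
      rw [key2, map_mul, pow_add, ← mul_assoc, mul_assoc (ψ (c i)), ← hYck, ← mul_assoc,
        mul_assoc (ψ (c i) * Y ^ (i : ℕ))]
    rw [Finset.sum_congr rfl fun i _ => hterm i, ← Finset.sum_mul_sum,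
      ← hz' z c hc, ← hz' w d hd]
  have hΦ1 : Φlin 1 = 1 := by
    have h := key2 0 1
    simpa using h
  have hΦι : ∀ l : L, Φlin (ι l) = ψ l := by
    intro l
    have h := key2 0 l
    simpa using h
  have hΦv : Φlin (v : A) = Y := by
    have h := key2 1 1
    simpa using h
  let Φhom : A →ₐ[K] M := AlgHom.ofLinearMap Φlin hΦ1 keymul
  have hΦbij : Function.Bijective Φhom := by
    exact hGbij.comp Fequiv.symm.bijective
  refine ⟨AlgEquiv.ofBijective Φhom hΦbij, fun l => hΦι l, hΦv⟩

/-- Correctness of the splitting algorithm for cyclic algebras: with `ψ : L → Mₙ(K)` a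
`K`-embedding, `X ∈ GLₙ(K)` conjugating `ψ` by `σ`, and `b = Xⁿ ∈ K^×`, any solution
`x` of the norm equation `N_{L/K}(x) = a/b` yields `(ψ(x)X)ⁿ = a`, and `ψ` extends to a
`K`-algebra isomorphism `(L/K, σ, a) → Mₙ(K)` sending `v` to `ψ(x)X`. -/
theorem cyclic_splitting_algorithm {K L A : Type*} [Field K] [Field L] [Algebra K L]
    [FiniteDimensional K L] [IsGalois K L] {n : ℕ} (hn : Module.finrank K L = n)
    (σ : L ≃ₐ[K] L) (hσ : ∀ g : L ≃ₐ[K] L, g ∈ Subgroup.zpowers σ)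
    [Ring A] [Algebra K A] (a : K) (ha : a ≠ 0)
    (pA : CyclicAlgebraPresentation K L A σ a)
    (ψ : L →ₐ[K] Matrix (Fin n) (Fin n) K)
    (X : (Matrix (Fin n) (Fin n) K)ˣ)
    (hX : ∀ l : L, (X : Matrix (Fin n) (Fin n) K) * ψ l * (↑X⁻¹ : Matrix (Fin n) (Fin n) K)
      = ψ (σ l))
    (b : K) (hb : b ≠ 0)
    (hXn : (X : Matrix (Fin n) (Fin n) K) ^ n = algebraMap K (Matrix (Fin n) (Fin n) K) b)
    (x : L) (hx : Algebra.norm K x = a / b) :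
    (ψ x * (X : Matrix (Fin n) (Fin n) K)) ^ n = algebraMap K (Matrix (Fin n) (Fin n) K) a ∧
    ∃ Φ : A ≃ₐ[K] Matrix (Fin n) (Fin n) K,
      (∀ l : L, Φ (pA.ι l) = ψ l) ∧ Φ (pA.v : A) = ψ x * (X : Matrix (Fin n) (Fin n) K) := by
  subst hn
  exact cyclic_splitting_aux rfl σ hσ a ha pA.ι pA.v pA.conj pA.vpow pA.repr
    ψ X hX b hb hXn x hx
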